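/- For every t ∈ [0,1] one has 0 ≤ P_u(t) ≤ P_u^b, where P_u^b = P_u(1) = ∑_{i=1}^N (−1)^{i+1}·binom(N,i)/(θ_A(i)+θ_C(i)); moreover P_u(0) = 0. (This bound on the upper-bound STP of a cached file by that of a backhaul file is used in the proof of the paper's Theorem 4.) -/

import Mathlib

open MeasureTheory Finset

/-- `θ_A(i) = 1 − 2∫_0^1 (iατ)u/(u^β+iατ) du`. -/
noncomputable def thetaA (β τ α : ℝ) (i : ℕ) : ℝ :=
  1 - 2 * ∫ u in (0 : ℝ)..1, ((i : ℝ) * α * τ) * u / (u ^ β + (i : ℝ) * α * τ)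

/-- `θ_C(i) = 2∫_0^∞ (iατ)u/(u^β+iατ) du`. -/
noncomputable def thetaC (β τ α : ℝ) (i : ℕ) : ℝ :=
  2 * ∫ u in Set.Ioi (0 : ℝ), ((i : ℝ) * α * τ) * u / (u ^ β + (i : ℝ) * α * τ)

/-- The upper-bound successful transmission probability of a cached file stored with caching
probability `t`: `P_u(t) = ∑_{i=1}^N (−1)^{i+1}·binom(N,i)·t/(θ_A(i)·t + θ_C(i))`. -/
noncomputable def Pu (β τ α : ℝ) (N : ℕ) (t : ℝ) : ℝ :=
  ∑ i ∈ Finset.Icc 1 N,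
    (-1 : ℝ) ^ (i + 1) * (N.choose i : ℝ) * t / (thetaA β τ α i * t + thetaC β τ α i)

/-!
Write `P_u(t) = ∑_{n<N} (-1)^n C(N,n+1) v(n)` with `v(n) = t / φ_t(n)` and
`φ_t(n) = θ_A(n+1) t + θ_C(n+1)`. Such an alternating binomial sum equals
`∑_{k<N} (-1)^k Δ^k v(0)`, so it is nonnegative once `v` is completely monotone
(`(-1)^k Δ^k v ≥ 0` for every `k`).

Splitting `∫_0^∞ = ∫_0^1 + ∫_1^∞` gives `φ_t = t + 2(1-t) ∫_0^1 g + 2 ∫_1^∞ g`, where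
`g = x u / (u^β + x) = u - u^(β+1) / (u^β + x)` at `x = (n+1)ατ`. Since `1 / (u^β + (n+1)ατ)`
is completely monotone in `n`, the increments of `φ_t` are completely monotone for `t ≤ 1`, and
then so is `1 / φ_t`: by the Leibniz rule for `Δ`, the reciprocal of a positive sequence with
completely monotone increments is completely monotone.

For monotonicity in `t`, `v_1(n) - v_t(n) = (1-t) θ_C(n+1) / (φ_1(n) φ_t(n)) = (n+1) w(n)` with
`w` completely monotone, because `θ_C(n+1) / (n+1) = 2 ∫_0^∞ ατ u / (u^β + x) du` is; and
`∑_{n<N} (-1)^n C(N,n+1) (n+1) w(n) = N (-1)^(N-1) Δ^(N-1) w(0) ≥ 0`.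
-/

open fwdDiff

def IsMonotoneOfOrder : ℕ → (ℕ → ℝ) → Prop
  | 0, f => 0 ≤ f
  | k + 1, f => 0 ≤ f ∧ IsMonotoneOfOrder k (-Δ_[1] f)

def CompletelyMonotone (f : ℕ → ℝ) : Prop := ∀ k, IsMonotoneOfOrder k f

namespace IsMonotoneOfOrder

theorem of_succ : ∀ {k : ℕ} {f : ℕ → ℝ}, IsMonotoneOfOrder (k + 1) f → IsMonotoneOfOrder k f
  | 0, _, hf => hf.1
  | _ + 1, _, hf => ⟨hf.1, of_succ hf.2⟩

theorem const : ∀ {k : ℕ} {a : ℝ}, 0 ≤ a → IsMonotoneOfOrder k fun _ => a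
  | 0, _, ha => fun _ => ha
  | _ + 1, _, ha => ⟨fun _ => ha, by convert const le_rfl using 1; funext; simp⟩

theorem add : ∀ {k : ℕ} {f g : ℕ → ℝ}, IsMonotoneOfOrder k f → IsMonotoneOfOrder k g →
    IsMonotoneOfOrder k (f + g)
  | 0, _, _, hf, hg => add_nonneg hf hg
  | _ + 1, _, _, hf, hg =>
    ⟨add_nonneg hf.1 hg.1, by rw [fwdDiff_add, neg_add]; exact add hf.2 hg.2⟩

theorem smul : ∀ {k : ℕ} {f : ℕ → ℝ} {a : ℝ}, 0 ≤ a → IsMonotoneOfOrder k f →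
    IsMonotoneOfOrder k (a • f)
  | 0, _, _, ha, hf => smul_nonneg ha hf
  | _ + 1, _, _, ha, hf => ⟨smul_nonneg ha hf.1, by simpa using smul ha hf.2⟩

theorem comp_add_one : ∀ {k : ℕ} {f : ℕ → ℝ}, IsMonotoneOfOrder k f →
    IsMonotoneOfOrder k fun n => f (n + 1)
  | 0, _, hf => fun n => hf (n + 1)
  | _ + 1, _, hf => ⟨fun n => hf.1 (n + 1), comp_add_one hf.2⟩

theorem neg_one_pow_mul_fwdDiff_iter_nonneg :
    ∀ {k : ℕ} {f : ℕ → ℝ}, IsMonotoneOfOrder k f → ∀ n, 0 ≤ (-1) ^ k * Δ_[1] ^[k] f n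
  | 0, _, hf, n => by simpa using hf n
  | k + 1, f, hf, n => by
    have h := neg_one_pow_mul_fwdDiff_iter_nonneg hf.2 n
    rwa [← neg_one_smul ℝ (Δ_[1] f), fwdDiff_iter_const_smul, ← Function.iterate_succ_apply,
      Pi.smul_apply, smul_eq_mul, ← mul_assoc, ← pow_succ] at h

theorem mul : ∀ {k : ℕ} {f g : ℕ → ℝ}, IsMonotoneOfOrder k f → IsMonotoneOfOrder k g →
    IsMonotoneOfOrder k (f * g)
  | 0, _, _, hf, hg => mul_nonneg hf hg
  | _ + 1, f, g, hf, hg => by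
    have leibniz : -Δ_[1] (f * g) = -Δ_[1] f * g + (fun n => f (n + 1)) * -Δ_[1] g := by
      funext n
      simp only [fwdDiff, Pi.neg_apply, Pi.add_apply, Pi.mul_apply]
      ring
    refine ⟨mul_nonneg hf.1 hg.1, ?_⟩
    rw [leibniz]
    exact (mul hf.2 hg.of_succ).add (mul hf.comp_add_one.of_succ hg.2)

theorem inv_of_completelyMonotone_fwdDiff : ∀ {k : ℕ} {φ : ℕ → ℝ}, (∀ n, 0 < φ n) →
    CompletelyMonotone (Δ_[1] φ) → IsMonotoneOfOrder k fun n => (φ n)⁻¹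
  | 0, _, hφ, _ => fun n => (inv_pos.2 (hφ n)).le
  | k + 1, φ, hφ, hΔ => by
    have hdiff : -Δ_[1] (fun n => (φ n)⁻¹) =
        Δ_[1] φ * (fun n => (φ n)⁻¹) * fun n => (φ (n + 1))⁻¹ := by
      funext n
      have := (hφ n).ne'
      have := (hφ (n + 1)).ne'
      simp only [fwdDiff, Pi.neg_apply, Pi.mul_apply]
      field_simp
      ring
    refine ⟨fun n => (inv_pos.2 (hφ n)).le, ?_⟩
    rw [hdiff]
    exact ((hΔ k).mul (inv_of_completelyMonotone_fwdDiff hφ hΔ)).mul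
      (inv_of_completelyMonotone_fwdDiff (fun n => hφ (n + 1)) fun j => (hΔ j).comp_add_one)

theorem integral {Ω : Type*} [MeasurableSpace Ω] {μ : Measure Ω} :
    ∀ {k : ℕ} {s : ℕ → Ω → ℝ}, (∀ n, Integrable (s n) μ) →
    (∀ᵐ u ∂μ, IsMonotoneOfOrder k fun n => s n u) → IsMonotoneOfOrder k fun n => ∫ u, s n u ∂μ
  | 0, _, _, hs => fun n => integral_nonneg_of_ae (hs.mono fun _ hu => hu n)
  | k + 1, s, hint, hs => by
    have hdiff : -Δ_[1] (fun n => ∫ u, s n u ∂μ) =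
        fun n => ∫ u, (-Δ_[1] fun m => s m u) n ∂μ := by
      funext n
      simp only [fwdDiff, Pi.neg_apply]
      rw [integral_neg, integral_sub (hint _) (hint _)]
    refine ⟨fun n => integral_nonneg_of_ae (hs.mono fun _ hu => hu.1 n), ?_⟩
    rw [hdiff]
    exact integral (fun n => ((hint (n + 1)).sub (hint n)).neg) (hs.mono fun _ hu => hu.2)

end IsMonotoneOfOrder

namespace CompletelyMonotone

variable {f g : ℕ → ℝ}

theorem const {a : ℝ} (ha : 0 ≤ a) : CompletelyMonotone fun _ => a :=
  fun _ => .const ha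

theorem smul {a : ℝ} (ha : 0 ≤ a) (hf : CompletelyMonotone f) : CompletelyMonotone (a • f) :=
  fun k => (hf k).smul ha

theorem add (hf : CompletelyMonotone f) (hg : CompletelyMonotone g) :
    CompletelyMonotone (f + g) :=
  fun k => (hf k).add (hg k)

theorem mul (hf : CompletelyMonotone f) (hg : CompletelyMonotone g) :
    CompletelyMonotone (f * g) :=
  fun k => (hf k).mul (hg k)

theorem comp_add_one (hf : CompletelyMonotone f) : CompletelyMonotone fun n => f (n + 1) :=
  fun k => (hf k).comp_add_one

theorem neg_fwdDiff (hf : CompletelyMonotone f) : CompletelyMonotone (-Δ_[1] f) :=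
  fun k => (hf (k + 1)).2

theorem inv {φ : ℕ → ℝ} (hφ : ∀ n, 0 < φ n) (hΔ : CompletelyMonotone (Δ_[1] φ)) :
    CompletelyMonotone fun n => (φ n)⁻¹ :=
  fun _ => .inv_of_completelyMonotone_fwdDiff hφ hΔ

theorem integral {Ω : Type*} [MeasurableSpace Ω] {μ : Measure Ω} {s : ℕ → Ω → ℝ}
    (hint : ∀ n, Integrable (s n) μ) (hs : ∀ᵐ u ∂μ, CompletelyMonotone fun n => s n u) :
    CompletelyMonotone fun n => ∫ u, s n u ∂μ :=
  fun k => .integral hint (hs.mono fun _ hu => hu k)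

theorem fwdDiff_integral {Ω : Type*} [MeasurableSpace Ω] {μ : Measure Ω} {s : ℕ → Ω → ℝ}
    (hint : ∀ n, Integrable (s n) μ) (hs : ∀ᵐ u ∂μ, CompletelyMonotone (Δ_[1] fun n => s n u)) :
    CompletelyMonotone (Δ_[1] fun n => ∫ u, s n u ∂μ) := by
  have hdiff : Δ_[1] (fun n => ∫ u, s n u ∂μ) = fun n => ∫ u, (Δ_[1] fun m => s m u) n ∂μ := by
    funext n
    exact (integral_sub (hint _) (hint _)).symm
  rw [hdiff]
  exact integral (fun n => (hint (n + 1)).sub (hint n)) hs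

theorem neg_one_pow_mul_fwdDiff_iter_nonneg (hf : CompletelyMonotone f) (k n : ℕ) :
    0 ≤ (-1) ^ k * Δ_[1] ^[k] f n :=
  (hf k).neg_one_pow_mul_fwdDiff_iter_nonneg n

theorem inv_add_mul {a c : ℝ} (ha : 0 < a) (hc : 0 ≤ c) :
    CompletelyMonotone fun n : ℕ => (a + n * c)⁻¹ := by
  refine inv (fun n => by positivity) ?_
  have : Δ_[1] (fun n : ℕ => a + n * c) = fun _ => c := by
    funext n
    simp only [fwdDiff, Nat.cast_add, Nat.cast_one]
    ring
  rw [this]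
  exact const hc

end CompletelyMonotone

theorem neg_one_pow_mul_fwdDiff_iter_eq_sum (f : ℕ → ℝ) (N : ℕ) :
    (-1) ^ N * Δ_[1] ^[N] f 0 = ∑ n ∈ range (N + 1), (-1) ^ n * N.choose n * f n := by
  rw [fwdDiff_iter_eq_sum_shift, mul_sum]
  refine sum_congr rfl fun n hn => ?_
  obtain ⟨m, rfl⟩ := Nat.exists_eq_add_of_le (Nat.lt_succ_iff.1 (mem_range.1 hn))
  simp only [zsmul_eq_mul, Int.cast_mul, Int.cast_pow, Int.cast_neg, Int.cast_one,
    Int.cast_natCast, smul_eq_mul, zero_add, mul_one, Nat.add_sub_cancel_left, pow_add]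
  rw [mul_assoc, ← mul_assoc ((-1) ^ m), ← mul_assoc ((-1) ^ m), ← pow_add,
    Even.neg_one_pow ⟨m, rfl⟩, one_mul, mul_assoc]

theorem sum_range_choose_succ_eq_sum_fwdDiff_iter (f : ℕ → ℝ) (N : ℕ) :
    ∑ n ∈ range N, (-1) ^ n * N.choose (n + 1) * f n =
      ∑ k ∈ range N, (-1) ^ k * Δ_[1] ^[k] f 0 := by
  induction N with
  | zero => simp
  | succ N ih =>
    have pascal : ∀ n, (-1 : ℝ) ^ n * (N + 1).choose (n + 1) * f n =
        (-1) ^ n * N.choose n * f n + (-1) ^ n * N.choose (n + 1) * f n := fun n => by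
      rw [Nat.choose_succ_succ, Nat.cast_add]
      ring
    rw [sum_congr rfl fun n _ => pascal n, sum_add_distrib, ← neg_one_pow_mul_fwdDiff_iter_eq_sum,
      sum_range_succ (fun n => (-1 : ℝ) ^ n * N.choose (n + 1) * f n), Nat.choose_succ_self, ih,
      sum_range_succ]
    rw [Nat.cast_zero, mul_zero, zero_mul, add_zero, add_comm]

theorem sum_range_choose_succ_mul_succ (f : ℕ → ℝ) (N : ℕ) :
    ∑ n ∈ range N, (-1) ^ n * N.choose (n + 1) * ((n + 1) * f n) =
      N * ((-1) ^ (N - 1) * Δ_[1] ^[N - 1] f 0) := by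
  cases N with
  | zero => simp
  | succ N =>
    rw [Nat.add_sub_cancel, neg_one_pow_mul_fwdDiff_iter_eq_sum, mul_sum]
    refine sum_congr rfl fun n _ => ?_
    have := Nat.add_one_mul_choose_eq N n
    rw [← Nat.cast_inj (R := ℝ)] at this
    push_cast at this ⊢
    linear_combination -((-1) ^ n * f n) * this

section Integrand

variable {β x u c : ℝ}

noncomputable def thetaIntegrand (β x u : ℝ) : ℝ := x * u / (u ^ β + x)

theorem thetaIntegrand_pos (hx : 0 < x) (hu : 0 < u) : 0 < thetaIntegrand β x u := by
  have := Real.rpow_pos_of_pos hu β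
  unfold thetaIntegrand
  positivity

theorem thetaIntegrand_le (hx : 0 < x) (hu : 0 ≤ u) : thetaIntegrand β x u ≤ u := by
  have := Real.rpow_nonneg hu β
  rw [thetaIntegrand, div_le_iff₀ (by positivity)]
  nlinarith

theorem integrableOn_Ioi_div_rpow_add (hβ : 2 < β) (hx : 0 < x) :
    IntegrableOn (fun u : ℝ => u / (u ^ β + x)) (Set.Ioi 0) := by
  have hmeas : AEStronglyMeasurable (fun u : ℝ => u / (u ^ β + x)) :=
    (measurable_id.div ((measurable_id.pow_const β).add_const x)).aestronglyMeasurable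
  rw [← Set.Ioc_union_Ioi_eq_Ioi zero_le_one]
  refine IntegrableOn.union (.of_bound measure_Ioc_lt_top hmeas.restrict x⁻¹ ?_)
    ((integrableOn_Ioi_rpow_of_lt (by linarith : 1 - β < -1) one_pos).mono' hmeas.restrict ?_)
  · refine ae_restrict_of_forall_mem measurableSet_Ioc fun u ⟨hu0, hu1⟩ => ?_
    have := Real.rpow_pos_of_pos hu0 β
    rw [Real.norm_of_nonneg (by positivity), div_le_iff₀ (by positivity)]
    field_simp
    nlinarith
  · refine ae_restrict_of_forall_mem measurableSet_Ioi fun u (hu : 1 < u) => ?_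
    have hu0 : 0 < u := by linarith
    have := Real.rpow_pos_of_pos hu0 β
    rw [Real.norm_of_nonneg (by positivity), Real.rpow_sub hu0, Real.rpow_one]
    exact div_le_div_of_nonneg_left hu0.le this (by linarith)

theorem integrableOn_thetaIntegrand (hβ : 2 < β) (hx : 0 < x) :
    IntegrableOn (thetaIntegrand β x) (Set.Ioi 0) := by
  unfold thetaIntegrand
  simp_rw [mul_div_assoc]
  exact (integrableOn_Ioi_div_rpow_add hβ hx).const_mul x

theorem setIntegral_thetaIntegrand_pos (hβ : 2 < β) (hx : 0 < x) :
    0 < ∫ u in Set.Ioi 0, thetaIntegrand β x u := by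
  rw [setIntegral_pos_iff_support_of_nonneg_ae
    (ae_restrict_of_forall_mem measurableSet_Ioi fun u hu => (thetaIntegrand_pos hx hu).le)
    (integrableOn_thetaIntegrand hβ hx)]
  have : Set.Ioi 0 ⊆ Function.support (thetaIntegrand β x) ∩ Set.Ioi 0 :=
    fun u hu => ⟨(thetaIntegrand_pos hx hu).ne', hu⟩
  exact (by simp : 0 < volume (Set.Ioi (0 : ℝ))).trans_le (measure_mono this)

theorem setIntegral_thetaIntegrand_le (hβ : 2 < β) (hx : 0 < x) :
    ∫ u in Set.Ioc 0 1, thetaIntegrand β x u ≤ 1 / 2 := by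
  calc ∫ u in Set.Ioc 0 1, thetaIntegrand β x u ≤ ∫ u in Set.Ioc 0 1, u :=
        setIntegral_mono_on ((integrableOn_thetaIntegrand hβ hx).mono_set Set.Ioc_subset_Ioi_self)
          continuous_id.integrableOn_Ioc measurableSet_Ioc fun u hu => thetaIntegrand_le hx hu.1.le
    _ = 1 / 2 := by
        rw [← intervalIntegral.integral_of_le zero_le_one, integral_id]
        norm_num

theorem completelyMonotone_fwdDiff_thetaIntegrand (hc : 0 < c) (hu : 0 < u) :
    CompletelyMonotone (Δ_[1] fun n : ℕ => thetaIntegrand β ((n + 1 : ℕ) * c) u) := by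
  have hA := Real.rpow_pos_of_pos hu β
  have key : Δ_[1] (fun n : ℕ => thetaIntegrand β ((n + 1 : ℕ) * c) u) =
      (u * u ^ β) • -Δ_[1] fun n : ℕ => (u ^ β + (n + 1 : ℕ) * c)⁻¹ := by
    funext n
    simp only [fwdDiff, thetaIntegrand, Pi.smul_apply, Pi.neg_apply, smul_eq_mul]
    field_simp
    ring
  rw [key]
  exact (CompletelyMonotone.inv_add_mul hA hc.le).comp_add_one.neg_fwdDiff.smul (by positivity)

end Integrand

section Theta

variable {β τ α t : ℝ} {n : ℕ}

theorem thetaA_eq (β τ α : ℝ) (i : ℕ) :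
    thetaA β τ α i = 1 - 2 * ∫ u in Set.Ioc 0 1, thetaIntegrand β (i * (α * τ)) u := by
  rw [thetaA, intervalIntegral.integral_of_le zero_le_one, ← mul_assoc]
  rfl

theorem thetaC_eq (β τ α : ℝ) (i : ℕ) :
    thetaC β τ α i = 2 * ∫ u in Set.Ioi 0, thetaIntegrand β (i * (α * τ)) u := by
  rw [thetaC, ← mul_assoc]
  rfl

theorem thetaA_nonneg (hβ : 2 < β) (hα : 0 < α) (hτ : 0 < τ) {i : ℕ} (hi : 0 < i) :
    0 ≤ thetaA β τ α i := by
  have : (0 : ℝ) < i := Nat.cast_pos.2 hi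
  have := setIntegral_thetaIntegrand_le hβ (by positivity : (0 : ℝ) < i * (α * τ))
  rw [thetaA_eq]
  linarith

theorem thetaC_pos (hβ : 2 < β) (hα : 0 < α) (hτ : 0 < τ) {i : ℕ} (hi : 0 < i) :
    0 < thetaC β τ α i := by
  have : (0 : ℝ) < i := Nat.cast_pos.2 hi
  rw [thetaC_eq]
  exact mul_pos two_pos (setIntegral_thetaIntegrand_pos hβ (by positivity))

noncomputable def PuDenom (β τ α t : ℝ) (n : ℕ) : ℝ :=
  thetaA β τ α (n + 1) * t + thetaC β τ α (n + 1)

theorem PuDenom_pos (hβ : 2 < β) (hα : 0 < α) (hτ : 0 < τ) (ht : 0 ≤ t) :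
    0 < PuDenom β τ α t n :=
  add_pos_of_nonneg_of_pos (mul_nonneg (thetaA_nonneg hβ hα hτ n.succ_pos) ht)
    (thetaC_pos hβ hα hτ n.succ_pos)

theorem PuDenom_eq (hβ : 2 < β) (hα : 0 < α) (hτ : 0 < τ) (t : ℝ) (n : ℕ) :
    PuDenom β τ α t n =
      t + 2 * (1 - t) * (∫ u in Set.Ioc 0 1, thetaIntegrand β ((n + 1 : ℕ) * (α * τ)) u) +
        2 * ∫ u in Set.Ioi 1, thetaIntegrand β ((n + 1 : ℕ) * (α * τ)) u := by
  have hint := integrableOn_thetaIntegrand hβ (by positivity : (0 : ℝ) < (n + 1 : ℕ) * (α * τ))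
  rw [PuDenom, thetaA_eq, thetaC_eq, ← Set.Ioc_union_Ioi_eq_Ioi zero_le_one,
    setIntegral_union Set.Ioc_disjoint_Ioi_same measurableSet_Ioi
      (hint.mono_set Set.Ioc_subset_Ioi_self) (hint.mono_set (Set.Ioi_subset_Ioi zero_le_one))]
  ring

theorem completelyMonotone_fwdDiff_PuDenom (hβ : 2 < β) (hα : 0 < α) (hτ : 0 < τ)
    (ht : t ≤ 1) : CompletelyMonotone (Δ_[1] (PuDenom β τ α t)) := by
  set F : Set ℝ → ℕ → ℝ := fun S n => ∫ u in S, thetaIntegrand β ((n + 1 : ℕ) * (α * τ)) u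
  have hF : ∀ S ⊆ Set.Ioi 0, MeasurableSet S → CompletelyMonotone (Δ_[1] (F S)) :=
    fun S hS hSm => .fwdDiff_integral
      (fun n => (integrableOn_thetaIntegrand hβ (by positivity)).mono_set hS)
      (ae_restrict_of_forall_mem hSm fun u hu =>
        completelyMonotone_fwdDiff_thetaIntegrand (mul_pos hα hτ) (hS hu))
  have hsplit : Δ_[1] (PuDenom β τ α t) =
      (2 * (1 - t)) • Δ_[1] (F (Set.Ioc 0 1)) + (2 : ℝ) • Δ_[1] (F (Set.Ioi 1)) := by
    funext n
    simp only [fwdDiff, Pi.add_apply, Pi.smul_apply, smul_eq_mul, PuDenom_eq hβ hα hτ, F]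
    ring
  rw [hsplit]
  exact ((hF _ Set.Ioc_subset_Ioi_self measurableSet_Ioc).smul (by linarith)).add
    ((hF _ (Set.Ioi_subset_Ioi zero_le_one) measurableSet_Ioi).smul zero_le_two)

theorem completelyMonotone_inv_PuDenom (hβ : 2 < β) (hα : 0 < α) (hτ : 0 < τ) (ht0 : 0 ≤ t)
    (ht1 : t ≤ 1) : CompletelyMonotone fun n => (PuDenom β τ α t n)⁻¹ :=
  .inv (fun _ => PuDenom_pos hβ hα hτ ht0) (completelyMonotone_fwdDiff_PuDenom hβ hα hτ ht1)

theorem completelyMonotone_thetaC_div (hβ : 2 < β) (hα : 0 < α) (hτ : 0 < τ) :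
    CompletelyMonotone fun n : ℕ => thetaC β τ α (n + 1) / (n + 1) := by
  have hrepr : ∀ n : ℕ, thetaC β τ α (n + 1) / (n + 1) =
      ∫ u in Set.Ioi 0, 2 * (α * τ) * (u / (u ^ β + (n + 1 : ℕ) * (α * τ))) := by
    intro n
    rw [thetaC_eq, integral_const_mul, div_eq_iff (by positivity)]
    simp only [thetaIntegrand, mul_div_assoc, integral_const_mul]
    push_cast
    ring
  simp_rw [hrepr]
  refine .integral
    (fun n => (integrableOn_Ioi_div_rpow_add hβ (by positivity)).const_mul _)
    (ae_restrict_of_forall_mem measurableSet_Ioi fun u (hu : 0 < u) => ?_)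
  have hA := Real.rpow_pos_of_pos hu β
  convert ((CompletelyMonotone.inv_add_mul hA (mul_pos hα hτ).le).comp_add_one).smul
    (by positivity : 0 ≤ 2 * (α * τ) * u) using 1
  funext n
  simp only [Pi.smul_apply, smul_eq_mul, div_eq_mul_inv]
  ring

end Theta

section Pu

theorem Pu_eq_sum_range (β τ α : ℝ) (N : ℕ) (t : ℝ) :
    Pu β τ α N t =
      ∑ n ∈ range N, (-1) ^ n * N.choose (n + 1) * (t * (PuDenom β τ α t n)⁻¹) := by
  rw [Pu, ← Finset.Ico_add_one_right_eq_Icc, sum_Ico_eq_sum_range, Nat.add_sub_cancel]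
  refine sum_congr rfl fun n _ => ?_
  rw [add_comm 1 n, PuDenom]
  ring

variable {β τ α t : ℝ} {N : ℕ}

theorem Pu_nonneg (hβ : 2 < β) (hα : 0 < α) (hτ : 0 < τ) (ht0 : 0 ≤ t) (ht1 : t ≤ 1) :
    0 ≤ Pu β τ α N t := by
  have hv := (completelyMonotone_inv_PuDenom hβ hα hτ ht0 ht1).smul ht0
  rw [Pu_eq_sum_range,
    sum_range_choose_succ_eq_sum_fwdDiff_iter fun n => t * (PuDenom β τ α t n)⁻¹]
  exact sum_nonneg fun k _ => hv.neg_one_pow_mul_fwdDiff_iter_nonneg k 0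

theorem Pu_le_Pu_one (hβ : 2 < β) (hα : 0 < α) (hτ : 0 < τ) (ht0 : 0 ≤ t) (ht1 : t ≤ 1) :
    Pu β τ α N t ≤ Pu β τ α N 1 := by
  set w : ℕ → ℝ := (1 - t) • ((fun n : ℕ => thetaC β τ α (n + 1) / (n + 1)) *
    (fun n => (PuDenom β τ α 1 n)⁻¹) * fun n => (PuDenom β τ α t n)⁻¹)
  have hw : CompletelyMonotone w :=
    (((completelyMonotone_thetaC_div hβ hα hτ).mul
      (completelyMonotone_inv_PuDenom hβ hα hτ zero_le_one le_rfl)).mul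
      (completelyMonotone_inv_PuDenom hβ hα hτ ht0 ht1)).smul (sub_nonneg.2 ht1)
  have hdiff : ∀ n : ℕ,
      1 * (PuDenom β τ α 1 n)⁻¹ - t * (PuDenom β τ α t n)⁻¹ = (n + 1) * w n := by
    intro n
    have h1 := (PuDenom_pos hβ hα hτ zero_le_one (n := n)).ne'
    have ht := (PuDenom_pos hβ hα hτ ht0 (n := n)).ne'
    simp only [w, Pi.smul_apply, Pi.mul_apply, smul_eq_mul]
    simp only [PuDenom, mul_one] at h1 ht ⊢
    field_simp
    ring
  rw [← sub_nonneg, Pu_eq_sum_range, Pu_eq_sum_range, ← sum_sub_distrib]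
  simp_rw [← mul_sub, hdiff]
  rw [sum_range_choose_succ_mul_succ]
  exact mul_nonneg (Nat.cast_nonneg N) (hw.neg_one_pow_mul_fwdDiff_iter_nonneg _ 0)

end Pu

theorem Pu_nonneg_le_Pub_general (β τ : ℝ) (hβ : 2 < β) (hτ : 0 < τ) (N : ℕ)
    (α : ℝ) (hα : α = (N.factorial : ℝ) ^ (-(1 : ℝ) / (N : ℝ))) :
    (∀ t ∈ Set.Icc (0 : ℝ) 1, 0 ≤ Pu β τ α N t ∧ Pu β τ α N t ≤ Pu β τ α N 1) ∧
    Pu β τ α N 1 =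
      ∑ i ∈ Finset.Icc 1 N,
        (-1 : ℝ) ^ (i + 1) * (N.choose i : ℝ) / (thetaA β τ α i + thetaC β τ α i) ∧
    Pu β τ α N 0 = 0 := by
  have hα0 : 0 < α := hα ▸ Real.rpow_pos_of_pos (Nat.cast_pos.2 N.factorial_pos) _
  refine ⟨fun t ⟨ht0, ht1⟩ => ⟨Pu_nonneg hβ hα0 hτ ht0 ht1, Pu_le_Pu_one hβ hα0 hτ ht0 ht1⟩,
    ?_, ?_⟩
  · simp only [Pu, mul_one]
  · simp [Pu]

/-- With `α = (N!)^{−1/N}`: for every `t ∈ [0,1]`, `0 ≤ P_u(t) ≤ P_u^b`, where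
`P_u^b = P_u(1) = ∑_{i=1}^N (−1)^{i+1}·binom(N,i)/(θ_A(i)+θ_C(i))`; moreover `P_u(0) = 0`.
(Used in the proof of the paper's Theorem 4.) -/
theorem Pu_nonneg_le_Pub (β τ : ℝ) (hβ : 2 < β) (hτ : 0 < τ) (N : ℕ) (hN : 1 ≤ N)
    (α : ℝ) (hα : α = (N.factorial : ℝ) ^ (-(1 : ℝ) / (N : ℝ))) :
    (∀ t ∈ Set.Icc (0 : ℝ) 1, 0 ≤ Pu β τ α N t ∧ Pu β τ α N t ≤ Pu β τ α N 1) ∧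
    Pu β τ α N 1 =
      ∑ i ∈ Finset.Icc 1 N,
        (-1 : ℝ) ^ (i + 1) * (N.choose i : ℝ) / (thetaA β τ α i + thetaC β τ α i) ∧
    Pu β τ α N 0 = 0 :=
  Pu_nonneg_le_Pub_general β τ hβ hτ N α hα
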